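/- arXiv:1707.08722 — 2 statements merged into one kernel-verified Lean document; each statement's English description precedes it below -/
import Mathlib

section
/- Let A₁, A₂ be real 3×4 matrices of rank 3 with nonzero focal points f₁, f₂ ∈ ℝ⁴ (A₁ f₁ = 0, A₂ f₂ = 0). Let X ∈ ℝ⁴ be such that f₁, f₂, X are linearly independent. If X′ ∈ ℝ⁴ satisfies A₁ X′ ∈ ℝ·(A₁ X) and A₂ X′ ∈ ℝ·(A₂ X), then X′ ∈ ℝ·X. In particular, the labeled two-view triangulation of a world point not on the baseline is unique up to scale. -/
/-! Since `Aᵢ` has rank 3, its kernel is the line `ℝ fᵢ`, so `X' - cᵢ X ∈ ℝ fᵢ` for `i = 1, 2`.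
Subtracting the two gives `a f₁ - b f₂ + (c₁ - c₂) X = 0`; independence of `f₁, f₂, X` forces
`a = 0`, i.e. `X' = c₁ X`. -/

open Matrix

theorem Matrix.ker_mulVecLin_eq_span_singleton {K m n : Type*} [Field K] [Fintype m] [Fintype n]
    {A : Matrix m n K} (hr : A.rank + 1 = Fintype.card n) {f : n → K} (hf : f ≠ 0)
    (hAf : A *ᵥ f = 0) : LinearMap.ker A.mulVecLin = K ∙ f := by
  have hker : Module.finrank K (LinearMap.ker A.mulVecLin) = 1 := by
    have := LinearMap.finrank_range_add_finrank_ker A.mulVecLin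
    rw [Module.finrank_fintype_fun_eq_card, ← hr] at this
    exact Nat.add_left_cancel this
  refine (Submodule.eq_of_le_of_finrank_eq ?_ ?_).symm
  · simpa [Submodule.span_le] using hAf
  · rw [hker, finrank_span_singleton hf]

theorem Matrix.sub_smul_mem_span_of_mulVec_eq_smul {K m n : Type*} [Field K] [Fintype m]
    [Fintype n] {A : Matrix m n K} (hr : A.rank + 1 = Fintype.card n) {f : n → K} (hf : f ≠ 0)
    (hAf : A *ᵥ f = 0) {x y : n → K} {c : K} (h : A *ᵥ y = c • A *ᵥ x) : y - c • x ∈ K ∙ f := by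
  rw [← ker_mulVecLin_eq_span_singleton hr hf hAf, LinearMap.mem_ker, map_sub, map_smul,
    mulVecLin_apply, mulVecLin_apply, h, sub_self]

theorem LinearIndependent.eq_smul_of_sub_smul_mem_span {K V : Type*} [Field K] [AddCommGroup V]
    [Module K V] {f₁ f₂ x y : V} {c₁ c₂ : K} (hind : LinearIndependent K ![f₁, f₂, x])
    (h₁ : y - c₁ • x ∈ K ∙ f₁) (h₂ : y - c₂ • x ∈ K ∙ f₂) : y = c₁ • x := by
  obtain ⟨a, ha⟩ := Submodule.mem_span_singleton.mp h₁
  obtain ⟨b, hb⟩ := Submodule.mem_span_singleton.mp h₂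
  have hrel : a • f₁ + (-b) • f₂ + (c₁ - c₂) • x = 0 := by
    linear_combination (norm := module) ha - hb
  have ha0 : a = 0 := by
    simpa using Fintype.linearIndependent_iff.mp hind ![a, -b, c₁ - c₂]
      (by simpa [Fin.sum_univ_three] using hrel) 0
  rw [← sub_eq_zero, ← ha, ha0, zero_smul]

theorem stmt_11 (A₁ A₂ : Matrix (Fin 3) (Fin 4) ℝ)
    (hrA₁ : A₁.rank = 3) (hrA₂ : A₂.rank = 3)
    (f₁ f₂ : Fin 4 → ℝ) (hf₁ : f₁ ≠ 0) (hf₂ : f₂ ≠ 0)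
    (hA₁f₁ : A₁.mulVec f₁ = 0) (hA₂f₂ : A₂.mulVec f₂ = 0)
    (X : Fin 4 → ℝ) (hind : LinearIndependent ℝ ![f₁, f₂, X]) :
    ∀ X' : Fin 4 → ℝ,
      (∃ c : ℝ, A₁.mulVec X' = c • A₁.mulVec X) →
      (∃ c : ℝ, A₂.mulVec X' = c • A₂.mulVec X) →
      ∃ c : ℝ, X' = c • X := by
  rintro X' ⟨c₁, h₁⟩ ⟨c₂, h₂⟩
  have mem₁ := sub_smul_mem_span_of_mulVec_eq_smul (by simp [hrA₁]) hf₁ hA₁f₁ h₁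
  have mem₂ := sub_smul_mem_span_of_mulVec_eq_smul (by simp [hrA₂]) hf₂ hA₂f₂ h₂
  exact ⟨c₁, hind.eq_smul_of_sub_smul_mem_span mem₁ mem₂⟩
end

section
/- Let A₁, A₂ be real 3×4 matrices of rank 3 with nonzero focal points f₁, f₂ ∈ ℝ⁴ (A₁ f₁ = 0, A₂ f₂ = 0) that are linearly independent. Let e₁₂ = A₁ f₂ be the epipole, let v ∈ ℝ³, and set N₁ = e₁₂ vᵀ + v e₁₂ᵀ. Then for EVERY symmetric real 3×3 matrix N₂, the linear map L sending (M′, λ₁, λ₂) (with M′ symmetric 4×4 and λ₁, λ₂ ∈ ℝ) to (A₁ M′ A₁ᵀ − λ₁ N₁, A₂ M′ A₂ᵀ − λ₂ N₂) has kernel of dimension at least 2: specifically, (f₁ f₂ᵀ + f₂ f₁ᵀ, 0, 0) ∈ ker L, and there exists w ∈ ℝ⁴ with A₁ w = v such that (f₂ wᵀ + w f₂ᵀ, 1, 0) ∈ ker L, and these two kernel elements are linearly independent. Hence when N₁ is built from the epipole, the rank condition on L imposes no constraint on N₂. -/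
open Matrix

/-- The submodule of symmetric real 4×4 matrices. -/
def Sym4 : Submodule ℝ (Matrix (Fin 4) (Fin 4) ℝ) where
  carrier := {M | M.IsSymm}
  add_mem' := fun ha hb => ha.add hb
  zero_mem' := Matrix.isSymm_zero
  smul_mem' := fun c _ h => h.smul c

/-!
Conjugating a symmetrised product `a bᵀ + b aᵀ` by a camera `A` gives
`(A a)(A b)ᵀ + (A b)(A a)ᵀ`. Hence `f₁ f₂ᵀ + f₂ f₁ᵀ` is killed by both cameras, and for any
preimage `w` of `v` under the surjective map `A₁` the matrix `f₂ wᵀ + w f₂ᵀ` is sent to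
`e₁₂ vᵀ + v e₁₂ᵀ = N₁` by `A₁` and to `0` by `A₂`. The two kernel elements are independent since
only the second has `λ₁ ≠ 0`, while the first has a nonzero matrix part because `f₁, f₂` are
independent.
-/

namespace Matrix

variable {m n K : Type*}

theorem mul_vecMulVec_add_vecMulVec_mul_transpose [Fintype n] [CommSemiring K]
    (A : Matrix m n K) (a b : n → K) :
    A * (vecMulVec a b + vecMulVec b a) * Aᵀ =
      vecMulVec (A *ᵥ a) (A *ᵥ b) + vecMulVec (A *ᵥ b) (A *ᵥ a) := by
  simp only [Matrix.mul_add, Matrix.add_mul, mul_vecMulVec, vecMulVec_mul, vecMul_transpose]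

theorem isSymm_vecMulVec_add_vecMulVec [CommSemiring K] (a b : n → K) :
    (vecMulVec a b + vecMulVec b a).IsSymm := by
  rw [IsSymm, transpose_add, transpose_vecMulVec, transpose_vecMulVec, add_comm]

theorem vecMulVec_add_vecMulVec_ne_zero [Field K] {a b : n → K}
    (h : LinearIndependent K ![a, b]) : vecMulVec a b + vecMulVec b a ≠ 0 := by
  intro h0
  obtain ⟨j, hj⟩ := Function.ne_iff.mp (h.ne_zero 1)
  have hdep : b j • a + a j • b = 0 := by
    funext i
    simpa [vecMulVec_apply, mul_comm] using congrFun (congrFun h0 i) j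
  exact hj (LinearIndependent.pair_iff.mp h _ _ hdep).1

theorem mulVec_surjective_of_rank_eq_card [Fintype m] [Fintype n] [Field K] {A : Matrix m n K}
    (h : A.rank = Fintype.card m) : Function.Surjective A.mulVec := by
  have hrange : LinearMap.range A.mulVecLin = ⊤ :=
    Submodule.eq_top_of_finrank_eq (by rw [Module.finrank_fintype_fun_eq_card]; exact h)
  exact LinearMap.range_eq_top.mp hrange

end Matrix

theorem linearIndependent_pair_prod_zero {K V W : Type*} [Field K] [AddCommGroup V] [Module K V]
    [AddCommGroup W] [Module K W] {x : V} {w : W} (hx : x ≠ 0) (hw : w ≠ 0) (y : V) :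
    LinearIndependent K ![(x, (0 : W)), (y, w)] := by
  refine LinearIndependent.pair_iff.mpr fun s t hst => ?_
  obtain ⟨hsx, htw⟩ := Prod.ext_iff.mp hst
  have ht : t = 0 := by simpa [hw] using htw
  subst ht
  exact ⟨by simpa [hx] using hsx, rfl⟩

universe u v w

theorem LinearIndependent.cardinal_lift_le_rank_of_forall_mem {R : Type u} {M : Type v}
    {ι : Type w} [Semiring R] [Nontrivial R] [AddCommMonoid M] [Module R M] {v : ι → M}
    (hv : LinearIndependent R v) {S : Submodule R M} (hS : ∀ i, v i ∈ S) :
    Cardinal.lift.{v} (Cardinal.mk ι) ≤ Cardinal.lift.{w} (Module.rank R S) :=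
  (LinearIndependent.of_comp S.subtype (v := fun i => (⟨v i, hS i⟩ : S)) hv).cardinal_lift_le_rank

theorem stmt_15_general (A₁ A₂ : Matrix (Fin 3) (Fin 4) ℝ)
    (hrA₁ : A₁.rank = 3)
    (f₁ f₂ : Fin 4 → ℝ)
    (hA₁f₁ : A₁.mulVec f₁ = 0) (hA₂f₂ : A₂.mulVec f₂ = 0)
    (hind : LinearIndependent ℝ ![f₁, f₂])
    (v : Fin 3 → ℝ) (e₁₂ : Fin 3 → ℝ) (he : e₁₂ = A₁.mulVec f₂)
    (N₁ : Matrix (Fin 3) (Fin 3) ℝ) (hN₁ : N₁ = vecMulVec e₁₂ v + vecMulVec v e₁₂)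
    (N₂ : Matrix (Fin 3) (Fin 3) ℝ)
    (L : (Sym4 × ℝ × ℝ) →ₗ[ℝ] Matrix (Fin 3) (Fin 3) ℝ × Matrix (Fin 3) (Fin 3) ℝ)
    (hL : ∀ p : Sym4 × ℝ × ℝ,
      L p = (A₁ * (p.1 : Matrix (Fin 4) (Fin 4) ℝ) * A₁ᵀ - p.2.1 • N₁,
             A₂ * (p.1 : Matrix (Fin 4) (Fin 4) ℝ) * A₂ᵀ - p.2.2 • N₂)) :
    ∃ hF : vecMulVec f₁ f₂ + vecMulVec f₂ f₁ ∈ Sym4,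
      (⟨vecMulVec f₁ f₂ + vecMulVec f₂ f₁, hF⟩, (0 : ℝ), (0 : ℝ)) ∈ LinearMap.ker L ∧
      (∃ (w : Fin 4 → ℝ) (hG : vecMulVec f₂ w + vecMulVec w f₂ ∈ Sym4),
        A₁.mulVec w = v ∧
        (⟨vecMulVec f₂ w + vecMulVec w f₂, hG⟩, (1 : ℝ), (0 : ℝ)) ∈ LinearMap.ker L ∧
        LinearIndependent ℝ
          ![((⟨vecMulVec f₁ f₂ + vecMulVec f₂ f₁, hF⟩, (0 : ℝ), (0 : ℝ)) :
              Sym4 × ℝ × ℝ),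
            (⟨vecMulVec f₂ w + vecMulVec w f₂, hG⟩, (1 : ℝ), (0 : ℝ))]) ∧
      2 ≤ Module.rank ℝ (LinearMap.ker L) := by
  have hF : vecMulVec f₁ f₂ + vecMulVec f₂ f₁ ∈ Sym4 := isSymm_vecMulVec_add_vecMulVec f₁ f₂
  obtain ⟨w, hw⟩ := mulVec_surjective_of_rank_eq_card (by simpa using hrA₁) v
  have hG : vecMulVec f₂ w + vecMulVec w f₂ ∈ Sym4 := isSymm_vecMulVec_add_vecMulVec f₂ w
  have hX : ((⟨_, hF⟩, (0 : ℝ), (0 : ℝ)) : Sym4 × ℝ × ℝ) ∈ LinearMap.ker L := by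
    simp [hL, mul_vecMulVec_add_vecMulVec_mul_transpose, hA₁f₁, hA₂f₂]
  have hY : ((⟨_, hG⟩, (1 : ℝ), (0 : ℝ)) : Sym4 × ℝ × ℝ) ∈ LinearMap.ker L := by
    simp [hL, mul_vecMulVec_add_vecMulVec_mul_transpose, hA₂f₂, hw, hN₁, he]
  have hFne : (⟨_, hF⟩ : Sym4) ≠ 0 := by
    simpa using vecMulVec_add_vecMulVec_ne_zero hind
  have hli := linearIndependent_pair_prod_zero (K := ℝ) (w := ((1 : ℝ), (0 : ℝ))) hFne
    (by simp) ⟨_, hG⟩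
  refine ⟨hF, hX, ⟨w, hG, hw, hY, hli⟩, ?_⟩
  simpa using hli.cardinal_lift_le_rank_of_forall_mem (Fin.forall_fin_two.2 ⟨hX, hY⟩)

theorem stmt_15 (A₁ A₂ : Matrix (Fin 3) (Fin 4) ℝ)
    (hrA₁ : A₁.rank = 3) (hrA₂ : A₂.rank = 3)
    (f₁ f₂ : Fin 4 → ℝ) (hf₁ : f₁ ≠ 0) (hf₂ : f₂ ≠ 0)
    (hA₁f₁ : A₁.mulVec f₁ = 0) (hA₂f₂ : A₂.mulVec f₂ = 0)
    (hind : LinearIndependent ℝ ![f₁, f₂])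
    (v : Fin 3 → ℝ) (e₁₂ : Fin 3 → ℝ) (he : e₁₂ = A₁.mulVec f₂)
    (N₁ : Matrix (Fin 3) (Fin 3) ℝ) (hN₁ : N₁ = vecMulVec e₁₂ v + vecMulVec v e₁₂)
    (N₂ : Matrix (Fin 3) (Fin 3) ℝ) (hN₂ : N₂.IsSymm)
    (L : (Sym4 × ℝ × ℝ) →ₗ[ℝ] Matrix (Fin 3) (Fin 3) ℝ × Matrix (Fin 3) (Fin 3) ℝ)
    (hL : ∀ p : Sym4 × ℝ × ℝ,
      L p = (A₁ * (p.1 : Matrix (Fin 4) (Fin 4) ℝ) * A₁ᵀ - p.2.1 • N₁,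
             A₂ * (p.1 : Matrix (Fin 4) (Fin 4) ℝ) * A₂ᵀ - p.2.2 • N₂)) :
    ∃ hF : vecMulVec f₁ f₂ + vecMulVec f₂ f₁ ∈ Sym4,
      (⟨vecMulVec f₁ f₂ + vecMulVec f₂ f₁, hF⟩, (0 : ℝ), (0 : ℝ)) ∈ LinearMap.ker L ∧
      (∃ (w : Fin 4 → ℝ) (hG : vecMulVec f₂ w + vecMulVec w f₂ ∈ Sym4),
        A₁.mulVec w = v ∧
        (⟨vecMulVec f₂ w + vecMulVec w f₂, hG⟩, (1 : ℝ), (0 : ℝ)) ∈ LinearMap.ker L ∧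
        LinearIndependent ℝ
          ![((⟨vecMulVec f₁ f₂ + vecMulVec f₂ f₁, hF⟩, (0 : ℝ), (0 : ℝ)) :
              Sym4 × ℝ × ℝ),
            (⟨vecMulVec f₂ w + vecMulVec w f₂, hG⟩, (1 : ℝ), (0 : ℝ))]) ∧
      2 ≤ Module.rank ℝ (LinearMap.ker L) :=
  stmt_15_general A₁ A₂ hrA₁ f₁ f₂ hA₁f₁ hA₂f₂ hind v e₁₂ he N₁ hN₁ N₂ L hL
end
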